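/- Fix an integer K ≥ 1 and a real number p ∈ (1/2,1], let A = A(p,K) be the (2K+2)×(2K+2) real matrix described in the context, and let a ∈ ℝ^{2K+2} be the vector with a_{2m+1} = 1 for m = 0,…,K and a_{2m+2} = 0 for m = 0,…,K. Then the vector v_1 ∈ ℝ^{2K+2} defined by v_{1,2m+1} = 2^{-(m+1)} for m = 0,…,K−1, v_{1,2K+1} = 2^{-K}, v_{1,2m+2} = (1−p)/((2p−1) 2^{m+1}) for m = 0,…,K−1, and v_{1,2K+2} = (1−p)/((2p−1) 2^K), satisfies A v_1 = (2p−1) v_1 and a·v_1 = 1; moreover it is the unique vector with these two properties. -/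

import Mathlib

open MeasureTheory ProbabilityTheory Filter Matrix Asymptotics
open scoped ENNReal NNReal Topology

noncomputable section

namespace PolyaUrnPaper

/-- The state space of a `q`-colour urn: vectors in `ℝ^q` with the Euclidean norm. -/
abbrev E (q : ℕ) := EuclideanSpace ℝ (Fin q)

/-- The complexified state space `ℂ^q` with the Euclidean norm. -/
abbrev EC (q : ℕ) := EuclideanSpace ℂ (Fin q)

variable {q : ℕ}

/-- Total activity `a · x` of a composition vector `x`. -/
def totAct (a : Fin q → ℝ) (x : E q) : ℝ := ∑ i, a i * x i

/-- Coordinatewise complexification of a real vector. -/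
def toC (x : E q) : EC q := WithLp.toLp 2 fun i => (x i : ℂ)

variable {Ω : Type*} [MeasurableSpace Ω]

/-- The σ-field `ℱ_n` generated by `X_1, …, X_n`. -/
def urnFiltration (X : ℕ → Ω → E q) (n : ℕ) : MeasurableSpace Ω :=
  ⨆ k ∈ Finset.Icc 1 n, MeasurableSpace.comap (X k) inferInstance

/-- The total activity process `S_n = a · X_n`. -/
def Sproc (a : Fin q → ℝ) (X : ℕ → Ω → E q) (n : ℕ) (ω : Ω) : ℝ := totAct a (X n ω)

/-- The increment `ΔX_n = X_{n+1} - X_n`. -/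
def ΔX (X : ℕ → Ω → E q) (n : ℕ) (ω : Ω) : E q := X (n + 1) ω - X n ω

/-- The event `E_n^c` of non-extinction up to time `n`. -/
def NE (a : Fin q → ℝ) (X : ℕ → Ω → E q) (n : ℕ) : Set Ω :=
  {ω | ∀ k ≤ n, 0 < Sproc a X k ω}

/-- The event of non-extinction (at all times). -/
def NEinf (a : Fin q → ℝ) (X : ℕ → Ω → E q) : Set Ω :=
  {ω | ∀ k, 0 < Sproc a X k ω}

/-- A generalized Pólya urn process: `P` is a probability measure, `a` the (nonnegative)
activity vector, `ξ i` the law of the replacement vector for colour `i`, `X₀` the non-random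
initial composition with `a · X₀ > 0`, and `X` the urn process.  The `dynamics` field states
that conditionally on `ℱ_n`, on the event `S_n > 0` the increment `ΔX_n` is distributed
as the mixture `∑ i (a_i X_{n,i}/S_n) ξ_i` (drawing colour `i` with probability
`a_i X_{n,i}/S_n` and then using law `ξ_i`, independently of the past), and `ΔX_n = 0`
on the event `S_n = 0`. -/
structure IsPolyaUrn (P : Measure Ω) (a : Fin q → ℝ) (ξ : Fin q → Measure (E q))
    (X₀ : E q) (X : ℕ → Ω → E q) : Prop where
  probP : IsProbabilityMeasure P
  probξ : ∀ i, IsProbabilityMeasure (ξ i)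
  ha : ∀ i, 0 ≤ a i
  hX₀nonneg : ∀ i, 0 ≤ X₀ i
  haX₀ : 0 < totAct a X₀
  hX0 : ∀ ω, X 0 ω = X₀
  measX : ∀ n, Measurable (X n)
  dynamics : ∀ n, ∀ B : Set (E q), MeasurableSet B →
    ∀ᵐ ω ∂P,
      (P[fun ω' => B.indicator (fun _ => (1 : ℝ)) (ΔX X n ω') | urnFiltration X n]) ω =
        if 0 < Sproc a X n ω then
          ∑ i, (a i * X n ω i / Sproc a X n ω) * (ξ i B).toReal
        else B.indicator (fun _ => (1 : ℝ)) 0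

/-- Tenability: almost surely all coordinates of `X_n` are nonnegative for all `n`. -/
def Tenable (P : Measure Ω) (X : ℕ → Ω → E q) : Prop :=
  ∀ n, ∀ᵐ ω ∂P, ∀ i, 0 ≤ X n ω i

/-- The urn is balanced in expectation with constant `b`:
`a · E ξ_i = b` for every colour `i` with positive activity. -/
def BalancedInExp (a : Fin q → ℝ) (ξ : Fin q → Measure (E q)) (b : ℝ) : Prop :=
  ∀ i, 0 < a i → ∫ x, totAct a x ∂(ξ i) = b

/-- The intensity matrix `A = (a_j E ξ_{j,i})_{i,j}`. -/
def intensity (a : Fin q → ℝ) (ξ : Fin q → Measure (E q)) : Matrix (Fin q) (Fin q) ℝ :=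
  Matrix.of fun i j => a j * ∫ x, x i ∂(ξ j)

/-- The intensity matrix viewed as a complex matrix. -/
def intensityC (a : Fin q → ℝ) (ξ : Fin q → Measure (E q)) : Matrix (Fin q) (Fin q) ℂ :=
  (intensity a ξ).map Complex.ofReal

/-- The largest eigenvalue `λ₁` of `A` equals `b`: `b` is an eigenvalue and it dominates
the real parts of all eigenvalues. -/
def LambdaOneIs (A : Matrix (Fin q) (Fin q) ℂ) (b : ℝ) : Prop :=
  (b : ℂ) ∈ spectrum ℂ A ∧ ∀ μ ∈ spectrum ℂ A, μ.re ≤ b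

/-- Condition `U(p)`: the urn is tenable and balanced in expectation with `λ₁ = b > 0`,
and `E|ξ_i|^p < ∞` for all colours `i`. -/
def CondU (P : Measure Ω) (a : Fin q → ℝ) (ξ : Fin q → Measure (E q))
    (X₀ : E q) (X : ℕ → Ω → E q) (b : ℝ) (p : ℝ) : Prop :=
  IsPolyaUrn P a ξ X₀ X ∧ Tenable P X ∧ BalancedInExp a ξ b ∧ 0 < b ∧
    LambdaOneIs (intensityC a ξ) b ∧
    ∀ i, ∫⁻ x, (‖x‖₊ : ℝ≥0∞) ^ p ∂(ξ i) < ∞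

/-- `Re λ₂`: the largest real part among the eigenvalues of `A` (counted with algebraic
multiplicity) after removing one copy of `λ₁ = b`. -/
def secondRe (A : Matrix (Fin q) (Fin q) ℂ) (b : ℝ) : ℝ :=
  letI : DecidableEq ℂ := Classical.decEq ℂ
  sSup (Complex.re '' {μ : ℂ | μ ∈ A.charpoly.roots.erase (b : ℂ)})

/-- `ν_λ`: one less than the size of the largest Jordan block of `A` for `λ`, i.e. the least
`m` such that `ker (A - λ)^{m+1} = ker (A - λ)^{m+2}`. -/
def nuOf (A : Matrix (Fin q) (Fin q) ℂ) (μ : ℂ) : ℕ :=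
  sInf {m : ℕ | LinearMap.ker (Matrix.mulVecLin ((A - μ • 1) ^ (m + 1))) =
      LinearMap.ker (Matrix.mulVecLin ((A - μ • 1) ^ (m + 2)))}

/-- `ν₂ = ν_{λ₂}`: the largest `ν_μ` among remaining eigenvalues `μ` with `Re μ = Re λ₂`. -/
def secondNu (A : Matrix (Fin q) (Fin q) ℂ) (b : ℝ) : ℕ :=
  letI : DecidableEq ℂ := Classical.decEq ℂ
  sSup (nuOf A '' {μ : ℂ | μ ∈ A.charpoly.roots.erase (b : ℂ) ∧ μ.re = secondRe A b})

/-- The generalized eigenspace of a matrix `A` for `μ`, i.e. `ker (A - μ I)^q`. -/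
def genEig (A : Matrix (Fin q) (Fin q) ℂ) (μ : ℂ) : Submodule ℂ (Fin q → ℂ) :=
  LinearMap.ker (Matrix.mulVecLin ((A - μ • 1) ^ q))

/-- `Pm` is the spectral projection of `A` for the eigenvalue `μ`: the projection onto the
generalized eigenspace of `μ` along the sum of the generalized eigenspaces of the other
eigenvalues. -/
def IsSpectralProjection (A : Matrix (Fin q) (Fin q) ℂ) (μ : ℂ)
    (Pm : Matrix (Fin q) (Fin q) ℂ) : Prop :=
  Pm * Pm = Pm ∧
    LinearMap.range Pm.mulVecLin = genEig A μ ∧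
    LinearMap.ker Pm.mulVecLin = ⨆ ν ∈ spectrum ℂ A \ {μ}, genEig A ν

/-- `ω_n = a·X₀ + n b`, the conditional expectation of the total activity. -/
def omegaSeq (a : Fin q → ℝ) (X₀ : E q) (b : ℝ) (n : ℕ) : ℝ := totAct a X₀ + n * b

/-- The matrix product `F_{ℓ,n} = ∏_{ℓ ≤ k < n} (I + ω_k⁻¹ A)` (complex version). -/
def FprodC (A : Matrix (Fin q) (Fin q) ℂ) (w : ℕ → ℝ) (l n : ℕ) : Matrix (Fin q) (Fin q) ℂ :=
  (((List.range' l (n - l)).map fun k =>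
      (1 : Matrix (Fin q) (Fin q) ℂ) + ((w k : ℂ))⁻¹ • A)).prod

/-- The matrix product `F_{ℓ,n} = ∏_{ℓ ≤ k < n} (I + ω_k⁻¹ A)` (real version). -/
def FprodR (A : Matrix (Fin q) (Fin q) ℝ) (w : ℕ → ℝ) (l n : ℕ) : Matrix (Fin q) (Fin q) ℝ :=
  (((List.range' l (n - l)).map fun k =>
      (1 : Matrix (Fin q) (Fin q) ℝ) + (w k)⁻¹ • A)).prod

/-- The operator norm (w.r.t. Euclidean norms) of a complex matrix. -/
def opNorm (M : Matrix (Fin q) (Fin q) ℂ) : ℝ :=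
  ‖LinearMap.toContinuousLinearMap (Matrix.toEuclideanLin M)‖

/-- The conditional expectation `E[X_n | E_n^c]` of the urn composition given
non-extinction up to time `n`. -/
def condMean (P : Measure Ω) (a : Fin q → ℝ) (X : ℕ → Ω → E q) (n : ℕ) : E q :=
  ∫ ω, X n ω ∂(P[|NE a X n])

/-- The martingale difference part `Y_n = ΔX_{n-1} - E[ΔX_{n-1} | ℱ_{n-1}]`. -/
def Yseq (P : Measure Ω) (X : ℕ → Ω → E q) (n : ℕ) (ω : Ω) : E q :=
  ΔX X (n - 1) ω - (P[ΔX X (n - 1) | urnFiltration X (n - 1)]) ω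

/-- The noise part `Z_n = ((ω_{n-1} - S_{n-1})/ω_{n-1}) E[ΔX_{n-1} | ℱ_{n-1}]`. -/
def Zseq (P : Measure Ω) (a : Fin q → ℝ) (X₀ : E q) (b : ℝ) (X : ℕ → Ω → E q)
    (n : ℕ) (ω : Ω) : E q :=
  ((omegaSeq a X₀ b (n - 1) - Sproc a X (n - 1) ω) / omegaSeq a X₀ b (n - 1)) •
    (P[ΔX X (n - 1) | urnFiltration X (n - 1)]) ω

/-- `(Y_n)_{n ≥ 1}` is a martingale difference sequence for the filtration `ℱ`. -/
def IsMDSeq {V : Type*} [NormedAddCommGroup V] [NormedSpace ℝ V] [CompleteSpace V]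
    (P : Measure Ω) (ℱ : ℕ → MeasurableSpace Ω) (Y : ℕ → Ω → V) : Prop :=
  ∀ n, 1 ≤ n → Integrable (Y n) P ∧ StronglyMeasurable[ℱ n] (Y n) ∧
    P[Y n | ℱ (n - 1)] =ᵐ[P] 0

/-- `G` is a centered Gaussian measure on `ℝ^q` with covariance matrix `Sig`,
characterized through its characteristic function. -/
def IsCenteredGaussianWithCov (Sig : Matrix (Fin q) (Fin q) ℝ) (G : Measure (E q)) : Prop :=
  IsProbabilityMeasure G ∧
    ∀ t : E q, ∫ x, Complex.exp (Complex.I * ((∑ i, t i * x i : ℝ) : ℂ)) ∂G =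
      Complex.exp (-(1 / 2 : ℂ) * ((∑ i, ∑ j, t i * Sig i j * t j : ℝ) : ℂ))

/-- Convergence in distribution of a sequence of (probability) measures on `ℝ^q`:
integrals of every bounded continuous function converge. -/
def TendstoInDistribution (μs : ℕ → Measure (E q)) (G : Measure (E q)) : Prop :=
  ∀ f : BoundedContinuousFunction (E q) ℝ,
    Tendsto (fun n => ∫ x, f x ∂(μs n)) atTop (𝓝 (∫ x, f x ∂G))


/-- Multiplication of a real matrix with a vector in `ℝ^q` (Euclidean). -/
def mulVecE {q : ℕ} (M : Matrix (Fin q) (Fin q) ℝ) (v : E q) : E q :=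
  WithLp.toLp 2 fun i => ∑ j, M i j * v j

/-- Multiplication of a complex matrix with a vector in `ℂ^q` (Euclidean). -/
def mulVecEC {q : ℕ} (M : Matrix (Fin q) (Fin q) ℂ) (v : EC q) : EC q :=
  WithLp.toLp 2 fun i => ∑ j, M i j * v j

/-- The algebraic multiplicity of `μ` as an eigenvalue of `A` (as a root of the
characteristic polynomial). -/
def algMult {q : ℕ} (A : Matrix (Fin q) (Fin q) ℂ) (μ : ℂ) : ℕ :=
  letI : DecidableEq ℂ := Classical.decEq ℂ
  A.charpoly.roots.count μ

end PolyaUrnPaper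



open PolyaUrnPaper MeasureTheory ProbabilityTheory Filter Matrix Polynomial

namespace PolyaUrnPaper

/-- The intensity matrix of the urn of outdegrees (up to `K`) of uniform attachment trees
with freezing, with activation probability `p` (0-indexed version of the matrix `A` of
Section 6.1). -/
def freezeMatrix (p : ℝ) (K : ℕ) : Matrix (Fin (2 * K + 2)) (Fin (2 * K + 2)) ℝ :=
  Matrix.of fun i j =>
    if j.val = 0 then
      (if i.val = 0 then p - 1 else if i.val = 1 then 1 - p else if i.val = 2 then p else 0)
    else if j.val % 2 = 0 ∧ j.val < 2 * K then
      (if i.val = 0 then p else 0) + (if i.val = j.val then -1 else 0) +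
        (if i.val = j.val + 1 then 1 - p else 0) + (if i.val = j.val + 2 then p else 0)
    else if j.val = 2 * K then
      (if i.val = 0 then p else 0) + (if i.val = 2 * K then -(1 - p) else 0) +
        (if i.val = 2 * K + 1 then 1 - p else 0)
    else 0

/-- The activity vector of the freezing urn: odd (paper) colours, i.e. even 0-based
indices, are active with activity `1`; frozen colours have activity `0`. -/
def freezeAct (K : ℕ) : Fin (2 * K + 2) → ℝ := fun j => if j.val % 2 = 0 then 1 else 0

/-- The right eigenvector `v₁` of `freezeMatrix p K` for the eigenvalue `2p - 1`,
normalized by `a · v₁ = 1`. -/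
def freezeV (p : ℝ) (K : ℕ) : E (2 * K + 2) := WithLp.toLp 2 fun j =>
  if j.val % 2 = 0 then
    (if j.val = 2 * K then (1 : ℝ) / 2 ^ K else 1 / 2 ^ (j.val / 2 + 1))
  else
    (if j.val = 2 * K + 1 then (1 - p) / ((2 * p - 1) * 2 ^ K)
     else (1 - p) / ((2 * p - 1) * 2 ^ (j.val / 2 + 1)))

end PolyaUrnPaper

/-! Read row by row (with 0-based indices, active colours at even positions), `A x = (2p-1) x`
says: `x₀ = (a·x)/2`; each later active entry is half the previous one, except the last, which
equals its predecessor; and each frozen entry is `(1-p)/(2p-1)` times the active entry before it.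
Hence an eigenvector with `a·x = 0` vanishes, which gives uniqueness, and `v₁` satisfies these
relations with `a·v₁ = ∑_{m<K} 2^{-(m+1)} + 2^{-K} = 1`. -/

namespace PolyaUrnPaper

variable {p : ℝ} {K : ℕ}

theorem freezeAct_dotProduct (x : Fin (2 * K + 2) → ℝ) :
    freezeAct K ⬝ᵥ x = ∑ m : Fin (K + 1), x ⟨2 * m, by omega⟩ := by
  refine (Fintype.sum_of_injective (fun m : Fin (K + 1) => (⟨2 * m, by omega⟩ : Fin (2 * K + 2)))
    ?_ _ _ ?_ ?_).symm
  · intro m n h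
    simp only [Fin.mk.injEq] at h
    omega
  · rintro ⟨j, hj⟩ hj'
    have : j % 2 = 1 := by
      by_contra h
      exact hj' ⟨⟨j / 2, by omega⟩, by ext; simp only; omega⟩
    simp [freezeAct, this]
  · intro m
    simp [freezeAct]

theorem freezeMatrix_row_zero :
    freezeMatrix p K ⟨0, by omega⟩ = p • freezeAct K - Pi.single ⟨0, by omega⟩ 1 := by
  ext ⟨j, hj⟩
  simp only [freezeMatrix, freezeAct, of_apply, Pi.sub_apply, Pi.smul_apply, Pi.single_apply,
    Fin.ext_iff, smul_eq_mul]
  split_ifs <;> first | ring1 | contradiction | omega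

theorem freezeMatrix_row_odd (m : ℕ) (hm : m ≤ K) :
    freezeMatrix p K ⟨2 * m + 1, by omega⟩ = Pi.single ⟨2 * m, by omega⟩ (1 - p) := by
  ext ⟨j, hj⟩
  simp only [freezeMatrix, of_apply, Pi.single_apply, Fin.ext_iff]
  split_ifs <;> first | ring1 | contradiction | omega

theorem freezeMatrix_row_even_succ (m : ℕ) (hm : m < K) :
    freezeMatrix p K ⟨2 * (m + 1), by omega⟩ =
      Pi.single ⟨2 * m, by omega⟩ p -
        Pi.single ⟨2 * (m + 1), by omega⟩ (if m + 1 = K then 1 - p else 1) := by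
  ext ⟨j, hj⟩
  simp only [freezeMatrix, of_apply, Pi.sub_apply, Pi.single_apply, Fin.ext_iff]
  split_ifs <;> first | ring1 | contradiction | omega

theorem freezeMatrix_mulVec_zero (x : Fin (2 * K + 2) → ℝ) :
    (freezeMatrix p K *ᵥ x) ⟨0, by omega⟩ = p * (freezeAct K ⬝ᵥ x) - x ⟨0, by omega⟩ := by
  change freezeMatrix p K _ ⬝ᵥ x = _
  rw [freezeMatrix_row_zero, sub_dotProduct, smul_dotProduct, single_dotProduct, smul_eq_mul,
    one_mul]

theorem freezeMatrix_mulVec_odd (x : Fin (2 * K + 2) → ℝ) (m : ℕ) (hm : m ≤ K) :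
    (freezeMatrix p K *ᵥ x) ⟨2 * m + 1, by omega⟩ = (1 - p) * x ⟨2 * m, by omega⟩ := by
  change freezeMatrix p K _ ⬝ᵥ x = _
  rw [freezeMatrix_row_odd m hm, single_dotProduct]

theorem freezeMatrix_mulVec_even_succ (x : Fin (2 * K + 2) → ℝ) (m : ℕ) (hm : m < K) :
    (freezeMatrix p K *ᵥ x) ⟨2 * (m + 1), by omega⟩ =
      p * x ⟨2 * m, by omega⟩ - (if m + 1 = K then 1 - p else 1) * x ⟨2 * (m + 1), by omega⟩ := by
  change freezeMatrix p K _ ⬝ᵥ x = _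
  rw [freezeMatrix_row_even_succ m hm, sub_dotProduct, single_dotProduct, single_dotProduct]

theorem freezeV_even (m : ℕ) (hm : m < K) : freezeV p K ⟨2 * m, by omega⟩ = 1 / 2 ^ (m + 1) := by
  simp [freezeV, hm.ne]

theorem freezeV_last : freezeV p K ⟨2 * K, by omega⟩ = 1 / 2 ^ K := by
  simp [freezeV]

theorem freezeV_odd (m : ℕ) (hm : m ≤ K) :
    freezeV p K ⟨2 * m + 1, by omega⟩ = (1 - p) / (2 * p - 1) * freezeV p K ⟨2 * m, by omega⟩ := by
  simp [freezeV, show (2 * m + 1) / 2 = m by omega]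
  split_ifs <;> simp only [div_eq_mul_inv, mul_inv, mul_assoc]

theorem sum_range_one_div_two_pow_succ (n : ℕ) :
    ∑ m ∈ Finset.range n, (1 : ℝ) / 2 ^ (m + 1) = 1 - 1 / 2 ^ n := by
  induction n with
  | zero => simp
  | succ n ih =>
    rw [Finset.sum_range_succ, ih, pow_succ]
    ring

theorem freezeAct_dotProduct_freezeV : freezeAct K ⬝ᵥ freezeV p K = 1 := by
  rw [freezeAct_dotProduct, Fin.sum_univ_castSucc]
  simp only [Fin.val_castSucc, Fin.val_last]
  rw [freezeV_last, Finset.sum_congr rfl fun (m : Fin K) _ => freezeV_even m m.isLt,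
    Fin.sum_univ_eq_sum_range (fun m => (1 : ℝ) / 2 ^ (m + 1)), sum_range_one_div_two_pow_succ]
  ring

theorem forall_fin_two_mul_add_two_iff {P : Fin (2 * K + 2) → Prop} :
    (∀ i, P i) ↔ P ⟨0, by omega⟩ ∧ (∀ m (hm : m < K), P ⟨2 * (m + 1), by omega⟩) ∧
      ∀ m (hm : m ≤ K), P ⟨2 * m + 1, by omega⟩ := by
  refine ⟨fun h => ⟨h _, fun _ _ => h _, fun _ _ => h _⟩, fun ⟨h0, heven, hodd⟩ => ?_⟩
  rintro ⟨i, hi⟩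
  obtain ⟨m, rfl | rfl⟩ := Nat.even_or_odd' i
  · rcases m with _ | m
    · exact h0
    · exact heven m (by omega)
  · exact hodd m (by omega)

theorem freezeMatrix_mulVec_freezeV (hK : 1 ≤ K) (hp : 2 * p - 1 ≠ 0) :
    freezeMatrix p K *ᵥ freezeV p K = (2 * p - 1) • freezeV p K := by
  funext i
  revert i
  simp only [Pi.smul_apply, smul_eq_mul]
  refine forall_fin_two_mul_add_two_iff.mpr ⟨?_, fun m hm => ?_, fun m hm => ?_⟩
  · rw [freezeMatrix_mulVec_zero, freezeAct_dotProduct_freezeV, freezeV_even 0 hK]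
    ring
  · rw [freezeMatrix_mulVec_even_succ _ m hm, freezeV_even m hm]
    split_ifs with hmK
    · subst hmK
      rw [freezeV_last]
      ring
    · rw [freezeV_even (m + 1) (by omega), pow_succ]
      ring
  · rw [freezeMatrix_mulVec_odd _ m hm, freezeV_odd m hm]
    rw [← mul_assoc, mul_div_cancel₀ _ hp]

theorem eq_zero_of_freezeMatrix_mulVec_eq_smul (hp₀ : p ≠ 0) (hp : 2 * p - 1 ≠ 0)
    {x : Fin (2 * K + 2) → ℝ} (hx : freezeMatrix p K *ᵥ x = (2 * p - 1) • x)
    (ha : freezeAct K ⬝ᵥ x = 0) : x = 0 := by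
  have row : ∀ i, (freezeMatrix p K *ᵥ x) i = (2 * p - 1) * x i := fun i => by rw [hx]; rfl
  have h2p₀ : 2 * p ≠ 0 := mul_ne_zero two_ne_zero hp₀
  have heven : ∀ m (hm : m ≤ K), x ⟨2 * m, by omega⟩ = 0 := by
    intro m
    induction m with
    | zero =>
      intro _
      have h := row ⟨0, by omega⟩
      rw [freezeMatrix_mulVec_zero, ha] at h
      have h' : (2 * p) * x ⟨0, by omega⟩ = 0 := by linear_combination -h
      exact (mul_eq_zero.mp h').resolve_left h2p₀
    | succ m ih =>
      intro hm
      have h := row ⟨2 * (m + 1), by omega⟩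
      rw [freezeMatrix_mulVec_even_succ x m hm, ih (by omega), mul_zero, zero_sub] at h
      split_ifs at h
      · have h' : p * x ⟨2 * (m + 1), by omega⟩ = 0 := by linear_combination -h
        exact (mul_eq_zero.mp h').resolve_left hp₀
      · have h' : (2 * p) * x ⟨2 * (m + 1), by omega⟩ = 0 := by linear_combination -h
        exact (mul_eq_zero.mp h').resolve_left h2p₀
  funext i
  revert i
  refine forall_fin_two_mul_add_two_iff.mpr ⟨heven 0 (by omega), fun m hm => heven (m + 1) hm,
    fun m hm => ?_⟩
  have h := row ⟨2 * m + 1, by omega⟩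
  rw [freezeMatrix_mulVec_odd x m hm, heven m hm, mul_zero] at h
  exact (mul_eq_zero.mp h.symm).resolve_left hp

end PolyaUrnPaper

/-- **From the proof of Proposition 6.1:** the vector `v₁` described explicitly is the
unique vector with `A v₁ = (2p-1) v₁` and `a · v₁ = 1`. -/
theorem freezeV_eigenvector (K : ℕ) (hK : 1 ≤ K) (p : ℝ)
    (hp : p ∈ Set.Ioc (1 / 2 : ℝ) 1) :
    ((freezeMatrix p K).mulVec (freezeV p K) = (2 * p - 1) • freezeV p K ∧
      freezeAct K ⬝ᵥ freezeV p K = 1) ∧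
    ∀ w : Fin (2 * K + 2) → ℝ,
      (freezeMatrix p K).mulVec w = (2 * p - 1) • w → freezeAct K ⬝ᵥ w = 1 →
      w = freezeV p K := by
  have hp₀ : p ≠ 0 := (by linarith [hp.1] : 0 < p).ne'
  have h2p : 2 * p - 1 ≠ 0 := (by linarith [hp.1] : 0 < 2 * p - 1).ne'
  have hv := freezeMatrix_mulVec_freezeV hK h2p
  refine ⟨⟨hv, freezeAct_dotProduct_freezeV⟩, fun w hw ha => ?_⟩
  refine sub_eq_zero.mp (eq_zero_of_freezeMatrix_mulVec_eq_smul hp₀ h2p ?_ ?_)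
  · rw [mulVec_sub, hw, hv, smul_sub]
  · rw [dotProduct_sub, ha, freezeAct_dotProduct_freezeV, sub_self]
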